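/- Let z ∈ Ĥ whose continued fraction algorithm does not end before defining z_{n+1}, and let x_n(z) = [f₀, f₁, …, f_n] be its n-th approximant. Then ν(z - x_n(z)) = deg(f_{n+1}) + 2·Σ_{i=1}^{n} deg(f_i). -/

import Mathlib

/-!
Write `z_i` for the complete quotients. Since `z₀ - f₀ = z₁⁻¹` and `x_n = f₀ + x'⁻¹`, where `x'` is
the `(n-1)`-th approximant of `z₁`, we get `z - x_n = z₁⁻¹ - x'⁻¹ = (x' - z₁) / (z₁ x')`.
By induction `ν (z₁ - x') > 0 > ν z₁`, so `ν x' = ν z₁` and each step adds `2 deg z₁`.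
Finally `deg z_i = deg f_i` for `i ≥ 1`, because `ν (z_i - f_i) > 0 > ν z_i`.
-/

universe u

/-- Evaluation of a finite continued fraction `[f₀, f₁, …, f_N]` in a field,
`cfEval [a] = a`, `cfEval (a :: l) = a + (cfEval l)⁻¹` (with the convention `0⁻¹ = 0`). -/
def cfEval {L : Type u} [Field L] : List L → L
  | [] => 0
  | a :: l => a + (cfEval l)⁻¹

/-- The Moebius maps `ρ_n = σ_n ∘ ⋯ ∘ σ_0`, where `σ_i x = (x - f_i)⁻¹`. -/
def rho {L : Type u} [Field L] (f : ℕ → L) : ℕ → L → L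
  | 0, x => (x - f 0)⁻¹
  | n + 1, x => (rho f n x - f (n + 1))⁻¹

/-- The derivative `ρ_n'` of `ρ_n`, computed by the chain rule from
`σ_i'(x) = -((x - f_i)⁻¹)²`. -/
def rho' {L : Type u} [Field L] (f : ℕ → L) : ℕ → L → L
  | 0, x => -((x - f 0)⁻¹) ^ 2
  | n + 1, x => -((rho f n x - f (n + 1))⁻¹) ^ 2 * rho' f n x

/-- An abstract presentation of the completion `K̂` of the Puiseux field
`E⟨⟨t⁻¹⟩⟩` over a field `E`.  The field `K` carries an additive valuation
`ν` with values in `ℚ` on nonzero elements (normalized by `ν (t^r) = -r`,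
where `mono r` plays the role of the monomial `t^r`), the subfield `E` is
embedded via `emb`, the simple "Laurent Puiseux polynomials" (the ring
generated by `E` and all rational powers of `t`) are dense, and `K` is
complete for `ν`. -/
structure PuiseuxCompletion (E : Type u) [Field E] where
  K : Type u
  [fieldK : Field K]
  ν : K → ℚ
  emb : E →+* K
  mono : ℚ → K
  mono_zero : mono 0 = 1
  mono_mul : ∀ r s : ℚ, mono r * mono s = mono (r + s)
  ν_mono : ∀ r : ℚ, ν (mono r) = -r
  ν_emb : ∀ e : E, e ≠ 0 → ν (emb e) = 0
  ν_mul : ∀ x y : K, x ≠ 0 → y ≠ 0 → ν (x * y) = ν x + ν y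
  ν_add : ∀ x y : K, x ≠ 0 → y ≠ 0 → x + y ≠ 0 → min (ν x) (ν y) ≤ ν (x + y)
  dense' : ∀ z : K, ∀ C : ℚ,
    ∃ f ∈ Subring.closure (Set.range emb ∪ Set.range mono), z = f ∨ C < ν (z - f)
  complete' : ∀ uSeq : ℕ → K,
    (∀ C : ℚ, ∃ N : ℕ, ∀ m ≥ N, ∀ n ≥ N, uSeq m = uSeq n ∨ C < ν (uSeq m - uSeq n)) →
    ∃ z : K, ∀ C : ℚ, ∃ N : ℕ, ∀ n ≥ N, uSeq n = z ∨ C < ν (uSeq n - z)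

attribute [instance] PuiseuxCompletion.fieldK

namespace PuiseuxCompletion

variable {E : Type u} [Field E] (P : PuiseuxCompletion E)

/-- The ring `Ā = E⟨t⟩` of Puiseux polynomials: finite `E`-linear combinations of
nonnegative rational powers of `t`. -/
def Abar : Subring P.K :=
  Subring.closure (Set.range P.emb ∪ P.mono '' {r : ℚ | 0 ≤ r})

/-- `deg f = -ν f`. -/
def deg (f : P.K) : ℚ := -P.ν f

/-- The rational Puiseux field `k̃ = Quot(Ā) = ⋃ₙ E(t^{1/n})`, as a subfield of `K̂`. -/
def ktilde : Subfield P.K := Subfield.closure (P.Abar : Set P.K)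

/-- `uSeq n → z` with respect to the valuation `ν`. -/
def TendsTo (uSeq : ℕ → P.K) (z : P.K) : Prop :=
  ∀ C : ℚ, ∃ N : ℕ, ∀ n ≥ N, uSeq n = z ∨ C < P.ν (uSeq n - z)

/-- One step of the continued fraction algorithm succeeds at index `i`:
`f i` is the Puiseux polynomial with `ν (z_i - f i) > 0`, the fraction does not
end at `i` (`z_i ≠ f i`), and `z_{i+1} = (z_i - f i)⁻¹`. -/
def CFStep (f zs : ℕ → P.K) (i : ℕ) : Prop :=
  f i ∈ P.Abar ∧ 0 < P.ν (zs i - f i) ∧ zs i ≠ f i ∧ zs (i + 1) = (zs i - f i)⁻¹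

/-- The `n`-th approximant `x_n = [f₀, …, f_n]_{ev}`. -/
def approx (f : ℕ → P.K) (n : ℕ) : P.K :=
  cfEval (List.ofFn fun i : Fin (n + 1) => f i)

/-- The continued fraction of `z` begins with the coefficients `f 0, …, f n`. -/
def CFBegins (f : ℕ → P.K) (n : ℕ) (z : P.K) : Prop :=
  ∃ zs : ℕ → P.K, zs 0 = z ∧ (∀ i < n, P.CFStep f zs i) ∧
    f n ∈ P.Abar ∧ (zs n = f n ∨ 0 < P.ν (zs n - f n))

/-- `z` is the value of the continued fraction expression with coefficients `f`
and length `L` (finite or infinite); the coefficients are Puiseux polynomials of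
positive degree after the zeroth one. -/
def CFExprEval (f : ℕ → P.K) (L : WithTop ℕ) (z : P.K) : Prop :=
  f 0 ∈ P.Abar ∧
  (∀ i : ℕ, 1 ≤ i → (i : WithTop ℕ) ≤ L → f i ∈ P.Abar ∧ 0 < P.deg (f i)) ∧
  ((∃ N : ℕ, L = (N : WithTop ℕ) ∧ z = P.approx f N) ∨
    (L = ⊤ ∧ P.TendsTo (fun n => P.approx f n) z))

/-- The equivalence relation `(a, r) ~ (a', r')` iff `r = r'` and `ν (a - a') ≥ r`
(the pairs define the same Berkovich point `η_{a,r}` of type II or III). -/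
def ballEquiv (p q : P.K × ℝ) : Prop :=
  p.2 = q.2 ∧ (p.1 = q.1 ∨ p.2 ≤ (P.ν (p.1 - q.1) : ℝ))

open scoped Classical in
/-- The Berkovich hyperbolic distance, computed on representatives. -/
noncomputable def berkDist (p q : P.K × ℝ) : ℝ :=
  if p.1 = q.1 ∨ min p.2 q.2 ≤ (P.ν (p.1 - q.1) : ℝ) then |p.2 - q.2|
  else p.2 + q.2 - 2 * (P.ν (p.1 - q.1) : ℝ)

/-- The closed ball `B_a^{[r]} = {b : ν (b - a) ≥ r}` corresponding to `η_{a,r}`. -/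
def closedBall (a : P.K) (r : ℝ) : Set P.K :=
  {b : P.K | b = a ∨ r ≤ (P.ν (b - a) : ℝ)}

/-- The Moebius transformation associated to a `2 × 2` matrix. -/
def mob (g : Matrix (Fin 2) (Fin 2) P.K) (x : P.K) : P.K :=
  (g 0 0 * x + g 0 1) / (g 1 0 * x + g 1 1)

/-- The ring `A_M = E[t^{1/M}]`. -/
def AM (M : ℕ) : Subring P.K :=
  Subring.closure (Set.range P.emb ∪ {P.mono (1 / (M : ℚ))})

/-- The field `E(t^{1/M})`, whose `ν`-completion inside `K̂` is `K_M = E((t^{-1/M}))`. -/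
def kM (M : ℕ) : Subfield P.K :=
  Subfield.closure (Set.range P.emb ∪ {P.mono (1 / (M : ℚ))})

end PuiseuxCompletion

lemma Finset.sum_Icc_one_eq_sum_range {M : Type*} [AddCommMonoid M] (g : ℕ → M) (n : ℕ) :
    ∑ i ∈ Finset.Icc 1 n, g i = ∑ i ∈ Finset.range n, g (i + 1) := by
  rw [← Finset.Ico_add_one_right_eq_Icc, Finset.sum_Ico_eq_sum_range, Nat.add_sub_cancel]
  simp only [add_comm 1]

namespace PuiseuxCompletion

variable {E : Type u} [Field E] (P : PuiseuxCompletion E)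

lemma ν_one : P.ν 1 = 0 := by
  simpa [P.mono_zero] using P.ν_mono 0

lemma ν_neg {x : P.K} (hx : x ≠ 0) : P.ν (-x) = P.ν x := by
  have hsq := P.ν_mul (-1) (-1) (neg_ne_zero.mpr one_ne_zero) (neg_ne_zero.mpr one_ne_zero)
  have hmul := P.ν_mul (-1) x (neg_ne_zero.mpr one_ne_zero) hx
  rw [neg_one_mul, neg_neg, P.ν_one] at hsq
  rw [neg_one_mul] at hmul
  linarith

lemma ν_sub_comm {x y : P.K} (h : x ≠ y) : P.ν (x - y) = P.ν (y - x) := by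
  rw [← neg_sub, P.ν_neg (sub_ne_zero.mpr h.symm)]

lemma ν_inv {x : P.K} (hx : x ≠ 0) : P.ν x⁻¹ = -P.ν x := by
  have h := P.ν_mul x x⁻¹ hx (inv_ne_zero hx)
  rw [mul_inv_cancel₀ hx, P.ν_one] at h
  linarith

lemma ν_eq_of_lt_ν_sub {a b : P.K} (ha : a ≠ 0) (h : P.ν a < P.ν (a - b)) :
    P.ν b = P.ν a := by
  rcases eq_or_ne a b with rfl | hab
  · rfl
  have hsub : a - b ≠ 0 := sub_ne_zero.mpr hab
  have hb : b ≠ 0 := by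
    rintro rfl
    simp at h
  have hle : min (P.ν a) (P.ν (a - b)) ≤ P.ν b := by
    rw [P.ν_sub_comm hab]
    simpa using P.ν_add a (b - a) ha (sub_ne_zero.mpr hab.symm) (by simpa using hb)
  have hge : min (P.ν b) (P.ν (a - b)) ≤ P.ν a := by
    simpa using P.ν_add b (a - b) hb hsub (by simpa using ha)
  rw [min_eq_left h.le] at hle
  rcases min_choice (P.ν b) (P.ν (a - b)) with hm | hm <;> rw [hm] at hge <;> linarith

lemma ν_inv_sub_inv {a b : P.K} (ha : a ≠ 0) (hb : b ≠ 0) (hab : a ≠ b) :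
    P.ν (a⁻¹ - b⁻¹) = P.ν (a - b) - P.ν a - P.ν b := by
  have hba : b - a ≠ 0 := sub_ne_zero.mpr hab.symm
  rw [inv_sub_inv' ha hb, P.ν_mul _ _ (mul_ne_zero (inv_ne_zero ha) hba) (inv_ne_zero hb),
    P.ν_mul _ _ (inv_ne_zero ha) hba, P.ν_inv ha, P.ν_inv hb, P.ν_sub_comm hab.symm]
  ring

lemma inv_sub_inv_ne_zero {a b : P.K} (hab : a ≠ b) : a⁻¹ - b⁻¹ ≠ 0 :=
  sub_ne_zero.mpr (inv_injective.ne hab)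

lemma deg_eq_of_ν_sub_pos {w c : P.K} (hw : w ≠ 0) (hdeg : 0 < P.deg w)
    (hc : w = c ∨ 0 < P.ν (w - c)) : P.deg c = P.deg w := by
  rcases hc with rfl | hc
  · rfl
  · rw [deg, deg, P.ν_eq_of_lt_ν_sub hw (by rw [deg] at hdeg; linarith)]

lemma approx_zero (f : ℕ → P.K) : P.approx f 0 = f 0 := by
  simp [approx, cfEval]

lemma approx_succ (f : ℕ → P.K) (n : ℕ) :
    P.approx f (n + 1) = f 0 + (P.approx (fun i => f (i + 1)) n)⁻¹ := by
  rw [approx, List.ofFn_succ]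
  rfl

variable {P}

namespace CFStep

variable {f zs : ℕ → P.K} {i : ℕ}

lemma sub_ne_zero (h : P.CFStep f zs i) : zs i - f i ≠ 0 :=
  _root_.sub_ne_zero.mpr h.2.2.1

lemma succ_ne_zero (h : P.CFStep f zs i) : zs (i + 1) ≠ 0 := by
  rw [h.2.2.2]
  exact inv_ne_zero h.sub_ne_zero

lemma deg_succ (h : P.CFStep f zs i) : P.deg (zs (i + 1)) = P.ν (zs i - f i) := by
  rw [deg, h.2.2.2, P.ν_inv h.sub_ne_zero, neg_neg]

lemma deg_succ_pos (h : P.CFStep f zs i) : 0 < P.deg (zs (i + 1)) :=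
  h.deg_succ ▸ h.2.1

lemma deg_coeff_succ (h : P.CFStep f zs i) (h' : P.CFStep f zs (i + 1)) :
    P.deg (f (i + 1)) = P.deg (zs (i + 1)) :=
  P.deg_eq_of_ν_sub_pos h.succ_ne_zero h.deg_succ_pos (Or.inr h'.2.1)

end CFStep

theorem sub_approx_ne_zero_and_ν_eq {f zs : ℕ → P.K} {n : ℕ}
    (hstep : ∀ i ≤ n, P.CFStep f zs i) :
    zs 0 - P.approx f n ≠ 0 ∧
      P.ν (zs 0 - P.approx f n) =
        P.deg (zs (n + 1)) + 2 * ∑ i ∈ Finset.range n, P.deg (zs (i + 1)) := by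
  induction n generalizing f zs with
  | zero =>
    have h := hstep 0 le_rfl
    rw [P.approx_zero, ← h.deg_succ]
    simpa using h.sub_ne_zero
  | succ n ih =>
    obtain ⟨hne, hν⟩ := ih (f := fun i => f (i + 1)) (zs := fun i => zs (i + 1))
      fun i hi => hstep (i + 1) (Nat.succ_le_succ hi)
    set x := P.approx (fun i => f (i + 1)) n
    have h0 := hstep 0 (Nat.zero_le _)
    have hz₁ : zs 1 ≠ 0 := h0.succ_ne_zero
    have hz₁x : zs 1 ≠ x := _root_.sub_ne_zero.mp hne
    have hsub_pos : 0 < P.ν (zs 1 - x) := by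
      rw [hν]
      have hlast := (hstep (n + 1) le_rfl).deg_succ_pos
      have hsum : 0 ≤ ∑ i ∈ Finset.range n, P.deg (zs (i + 1 + 1)) :=
        Finset.sum_nonneg fun i hi =>
          (hstep (i + 1) (by simp at hi; omega)).deg_succ_pos.le
      linarith
    have hνz₁ : P.ν (zs 1) < 0 := by
      have := h0.deg_succ_pos
      rw [deg] at this
      linarith
    have hνx : P.ν x = P.ν (zs 1) := P.ν_eq_of_lt_ν_sub hz₁ (by linarith)
    have hx : x ≠ 0 := by
      rintro h
      rw [h, sub_zero] at hsub_pos
      linarith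
    have herr : zs 0 - P.approx f (n + 1) = (zs 1)⁻¹ - x⁻¹ := by
      rw [P.approx_succ, h0.2.2.2, inv_inv]
      ring
    rw [herr]
    refine ⟨P.inv_sub_inv_ne_zero hz₁x, ?_⟩
    rw [P.ν_inv_sub_inv hz₁ hx hz₁x, hν, hνx, Finset.sum_range_succ']
    simp only [deg]
    ring

end PuiseuxCompletion

open PuiseuxCompletion in
theorem statement4_general {E : Type u} [Field E] (P : PuiseuxCompletion E)
    (z : P.K) (f zs : ℕ → P.K) (n : ℕ)
    (h0 : zs 0 = z) (hstep : ∀ i ≤ n, P.CFStep f zs i)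
    (hcn : zs (n + 1) = f (n + 1) ∨ 0 < P.ν (zs (n + 1) - f (n + 1))) :
    P.ν (z - P.approx f n) =
      P.deg (f (n + 1)) + 2 * ∑ i ∈ Finset.Icc 1 n, P.deg (f i) := by
  have hlast := hstep n le_rfl
  have hcoeff : ∀ i ∈ Finset.range n, P.deg (f (i + 1)) = P.deg (zs (i + 1)) := fun i hi =>
    (hstep i (by simp at hi; omega)).deg_coeff_succ (hstep (i + 1) (by simp at hi; omega))
  rw [← h0, (sub_approx_ne_zero_and_ν_eq hstep).2,
    P.deg_eq_of_ν_sub_pos hlast.succ_ne_zero hlast.deg_succ_pos hcn,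
    Finset.sum_Icc_one_eq_sum_range, Finset.sum_congr rfl hcoeff]

open PuiseuxCompletion in
/-- `ν (z - x_n(z)) = deg f_{n+1} + 2 Σ_{i=1}^n deg f_i` whenever the
continued fraction algorithm of `z` does not end before defining `z_{n+1}`. -/
theorem statement4 {E : Type u} [Field E] (P : PuiseuxCompletion E)
    (z : P.K) (f zs : ℕ → P.K) (n : ℕ)
    (h0 : zs 0 = z) (hstep : ∀ i ≤ n, P.CFStep f zs i)
    (hfn : f (n + 1) ∈ P.Abar)
    (hcn : zs (n + 1) = f (n + 1) ∨ 0 < P.ν (zs (n + 1) - f (n + 1))) :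
    P.ν (z - P.approx f n) =
      P.deg (f (n + 1)) + 2 * ∑ i ∈ Finset.Icc 1 n, P.deg (f i) :=
  statement4_general P z f zs n h0 hstep hcn
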